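/- Let 1 ≤ p ≤ 2 and α < −p−1. Then Σ_{n=1}^∞ |F_m(n)|^p (n+1)^α tends to 0 as m → ∞. -/

import Mathlib

open Finset Filter ArithmeticFunction

/-- `r k n = k·{n/k} = n mod k`. -/
noncomputable def r (k n : ℕ) : ℝ := (n % k : ℕ)

/-- `F_m(n) = 1 + Σ_{k=2}^m (μ(k)/k)·r_k(n) − (Σ_{k=1}^m μ(k)/k)·r_m(n)`. -/
noncomputable def F (m n : ℕ) : ℝ :=
  1 + ∑ k ∈ Finset.Icc 2 m, (moebius k : ℝ) / k * r k n
    - (∑ k ∈ Finset.Icc 1 m, (moebius k : ℝ) / k) * r m n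

lemma moeb_div (j : ℕ) : (∑ d ∈ j.divisors, (moebius d : ℤ)) = if j = 1 then 1 else 0 := by
  have h := congrArg (fun f : ArithmeticFunction ℤ => f j) moebius_mul_coe_zeta
  simp only [coe_mul_zeta_apply, one_apply] at h
  exact h

lemma div_eq_card (n k : ℕ) : (n / k : ℕ) = #{x ∈ Finset.Icc 1 n | k ∣ x} := by
  rw [← Nat.Ioc_filter_dvd_card_eq_div]
  congr 1

lemma filter_dvd_eq_divisors' {j n : ℕ} (h1 : 1 ≤ j) (h2 : j ≤ n) :
    {k ∈ Finset.Icc 1 n | k ∣ j} = j.divisors := by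
  ext k
  simp only [Finset.mem_filter, Finset.mem_Icc, Nat.mem_divisors]
  constructor
  · rintro ⟨⟨hk1, _⟩, hd⟩; exact ⟨hd, by omega⟩
  · rintro ⟨hd, _⟩
    exact ⟨⟨Nat.pos_of_dvd_of_pos hd h1, le_trans (Nat.le_of_dvd h1 hd) h2⟩, hd⟩

lemma sum_moeb_div (n : ℕ) (hn : 1 ≤ n) :
    (∑ k ∈ Finset.Icc 1 n, (moebius k : ℤ) * (n / k : ℕ)) = 1 := by
  have h1 : ∀ k, (moebius k : ℤ) * (n / k : ℕ)
      = ∑ j ∈ Finset.Icc 1 n, if k ∣ j then (moebius k : ℤ) else 0 := by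
    intro k
    rw [div_eq_card, ← Finset.sum_filter, Finset.sum_const, nsmul_eq_mul, mul_comm]
  calc ∑ k ∈ Finset.Icc 1 n, (moebius k : ℤ) * (n / k : ℕ)
      = ∑ k ∈ Finset.Icc 1 n, ∑ j ∈ Finset.Icc 1 n,
          if k ∣ j then (moebius k : ℤ) else 0 := Finset.sum_congr rfl fun k _ => h1 k
    _ = ∑ j ∈ Finset.Icc 1 n, ∑ k ∈ Finset.Icc 1 n,
          if k ∣ j then (moebius k : ℤ) else 0 := Finset.sum_comm
    _ = ∑ j ∈ Finset.Icc 1 n, if j = 1 then (1:ℤ) else 0 := by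
        refine Finset.sum_congr rfl fun j hj => ?_
        rw [Finset.mem_Icc] at hj
        rw [← Finset.sum_filter, filter_dvd_eq_divisors' hj.1 hj.2, moeb_div]
    _ = 1 := by
        rw [Finset.sum_ite_eq' (Finset.Icc 1 n) 1 (fun _ => (1:ℤ))]
        simp [hn]


lemma sum_moeb_div_ge (n m : ℕ) (hn : 1 ≤ n) (hm : n ≤ m) :
    (∑ k ∈ Finset.Icc 1 m, (moebius k : ℤ) * (n / k : ℕ)) = 1 := by
  rw [← sum_moeb_div n hn]
  symm
  apply Finset.sum_subset
  · exact Finset.Icc_subset_Icc_right hm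
  · intro k hk hk'
    rw [Finset.mem_Icc] at hk hk'
    have : n / k = 0 := Nat.div_eq_of_lt (by omega)
    simp [this]

lemma r_eq (k n : ℕ) : r k n = (n : ℝ) - k * (n / k : ℕ) := by
  have h : ((n % k : ℕ) : ℝ) + k * (n / k : ℕ) = n := by exact_mod_cast Nat.mod_add_div n k
  unfold r; linarith

lemma Icc_one_eq (m : ℕ) (hm : 1 ≤ m) : Finset.Icc 1 m = insert 1 (Finset.Icc 2 m) := by
  ext k
  simp only [Finset.mem_Icc, Finset.mem_insert]
  omega

lemma F_eq (m n : ℕ) (hm : 1 ≤ m) :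
    F m n = 1 + (n : ℝ) * (∑ k ∈ Finset.Icc 1 m, (moebius k : ℝ) / k)
      - (∑ k ∈ Finset.Icc 1 m, (moebius k : ℝ) * (n / k : ℕ))
      - (∑ k ∈ Finset.Icc 1 m, (moebius k : ℝ) / k) * r m n := by
  have h2 : ∑ k ∈ Finset.Icc 2 m, (moebius k : ℝ) / k * r k n
      = ∑ k ∈ Finset.Icc 1 m, (moebius k : ℝ) / k * r k n := by
    rw [Icc_one_eq m hm, Finset.sum_insert (by simp)]
    simp [r, Nat.mod_one]
  have h3 : ∑ k ∈ Finset.Icc 1 m, (moebius k : ℝ) / k * r k n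
      = (n : ℝ) * (∑ k ∈ Finset.Icc 1 m, (moebius k : ℝ) / k)
        - ∑ k ∈ Finset.Icc 1 m, (moebius k : ℝ) * (n / k : ℕ) := by
    rw [Finset.mul_sum, ← Finset.sum_sub_distrib]
    refine Finset.sum_congr rfl fun k hk => ?_
    rw [Finset.mem_Icc] at hk
    have hk0 : (k : ℝ) ≠ 0 := by exact_mod_cast Nat.one_le_iff_ne_zero.mp hk.1
    rw [r_eq]
    field_simp
  unfold F
  rw [h2, h3]
  ring

lemma abs_moeb_real (k : ℕ) : |(moebius k : ℝ)| ≤ 1 := by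
  have := ArithmeticFunction.abs_moebius_le_one (n := k)
  calc |(moebius k : ℝ)| = ((|moebius k| : ℤ) : ℝ) := by push_cast; rfl
    _ ≤ 1 := by exact_mod_cast this

lemma F_zero (m n : ℕ) (hn : 1 ≤ n) (hnm : n < m) : F m n = 0 := by
  have hm : 1 ≤ m := by omega
  rw [F_eq m n hm]
  have h1 : (∑ k ∈ Finset.Icc 1 m, (moebius k : ℝ) * (n / k : ℕ)) = 1 := by
    have hz := sum_moeb_div_ge n m hn (le_of_lt hnm)
    have h' : ((∑ k ∈ Finset.Icc 1 m, (moebius k : ℤ) * (n / k : ℕ) : ℤ) : ℝ) = 1 := by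
      rw [hz]; norm_num
    rw [← h']; push_cast; rfl
  have h2 : r m n = n := by unfold r; rw [Nat.mod_eq_of_lt hnm]
  rw [h1, h2]; ring

lemma S_bound (m : ℕ) (hm : 1 ≤ m) : |∑ k ∈ Finset.Icc 1 m, (moebius k : ℝ) / k| ≤ 1 := by
  have key : (m : ℝ) * (∑ k ∈ Finset.Icc 1 m, (moebius k : ℝ) / k)
      = 1 + ∑ k ∈ Finset.Icc 1 m, (moebius k : ℝ) * r k m / k := by
    have h1 : (∑ k ∈ Finset.Icc 1 m, (moebius k : ℝ) * (m / k : ℕ)) = 1 := by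
      have hz := sum_moeb_div_ge m m hm le_rfl
      have h' : ((∑ k ∈ Finset.Icc 1 m, (moebius k : ℤ) * (m / k : ℕ) : ℤ) : ℝ) = 1 := by
        rw [hz]; norm_num
      rw [← h']; push_cast; rfl
    rw [← h1, Finset.mul_sum, ← Finset.sum_add_distrib]
    refine Finset.sum_congr rfl fun k hk => ?_
    rw [Finset.mem_Icc] at hk
    have hk0 : (k : ℝ) ≠ 0 := by exact_mod_cast Nat.one_le_iff_ne_zero.mp hk.1
    rw [r_eq]
    field_simp
    ring
  have habs : |∑ k ∈ Finset.Icc 1 m, (moebius k : ℝ) * r k m / k| ≤ (m : ℝ) - 1 := by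
    rw [Icc_one_eq m hm, Finset.sum_insert (by simp)]
    have h1 : (moebius 1 : ℝ) * r 1 m / ((1:ℕ):ℝ) = 0 := by simp [r, Nat.mod_one]
    rw [h1, zero_add]
    calc |∑ k ∈ Finset.Icc 2 m, (moebius k : ℝ) * r k m / k|
        ≤ ∑ k ∈ Finset.Icc 2 m, |(moebius k : ℝ) * r k m / k| := Finset.abs_sum_le_sum_abs _ _
      _ ≤ ∑ k ∈ Finset.Icc 2 m, 1 := by
          refine Finset.sum_le_sum fun k hk => ?_
          rw [Finset.mem_Icc] at hk
          have hkpos : (0:ℝ) < k := by exact_mod_cast by omega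
          have hr : |r k m / k| ≤ 1 := by
            rw [abs_div, abs_of_pos hkpos, div_le_one hkpos]
            have : (m % k : ℕ) ≤ k := le_of_lt (Nat.mod_lt _ (by omega))
            unfold r
            rw [abs_of_nonneg (by positivity)]
            exact_mod_cast this
          calc |(moebius k : ℝ) * r k m / k| = |(moebius k : ℝ)| * |r k m / k| := by
                rw [mul_div_assoc, abs_mul]
            _ ≤ 1 * 1 := mul_le_mul (abs_moeb_real k) hr (abs_nonneg _) zero_le_one
            _ = 1 := one_mul 1
      _ = (m : ℝ) - 1 := by
          rw [Finset.sum_const, Nat.card_Icc, nsmul_eq_mul, mul_one]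
          have h2 : m + 1 - 2 = m - 1 := by omega
          rw [h2, Nat.cast_sub hm, Nat.cast_one]
  have hmpos : (0:ℝ) < m := by exact_mod_cast hm
  rw [abs_le]
  constructor <;> nlinarith [abs_le.mp habs, key, abs_nonneg (∑ k ∈ Finset.Icc 1 m, (moebius k : ℝ) * r k m / k)]

lemma r_nonneg (k n : ℕ) : 0 ≤ r k n := by unfold r; positivity

lemma r_le (k n : ℕ) (hk : 1 ≤ k) : r k n ≤ k := by
  unfold r
  exact_mod_cast le_of_lt (Nat.mod_lt _ (by omega))

lemma F_bound (m n : ℕ) (hm : 1 ≤ m) : |F m n| ≤ 2 * m := by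
  unfold F
  have h1 : |∑ k ∈ Finset.Icc 2 m, (moebius k : ℝ) / k * r k n| ≤ (m : ℝ) - 1 := by
    calc |∑ k ∈ Finset.Icc 2 m, (moebius k : ℝ) / k * r k n|
        ≤ ∑ k ∈ Finset.Icc 2 m, |(moebius k : ℝ) / k * r k n| := Finset.abs_sum_le_sum_abs _ _
      _ ≤ ∑ k ∈ Finset.Icc 2 m, 1 := by
          refine Finset.sum_le_sum fun k hk => ?_
          rw [Finset.mem_Icc] at hk
          have hkpos : (0:ℝ) < k := by exact_mod_cast by omega
          calc |(moebius k : ℝ) / k * r k n| = |(moebius k : ℝ)| * (r k n / k) := by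
                rw [div_mul_eq_mul_div, abs_div, abs_mul, abs_of_pos hkpos,
                  abs_of_nonneg (r_nonneg k n), mul_div_assoc]
            _ ≤ 1 * 1 := by
                refine mul_le_mul (abs_moeb_real k) ?_ (div_nonneg (r_nonneg k n) hkpos.le) zero_le_one
                rw [div_le_one hkpos]
                exact r_le k n (by omega)
            _ = 1 := one_mul 1
      _ = (m : ℝ) - 1 := by
          rw [Finset.sum_const, Nat.card_Icc, nsmul_eq_mul, mul_one]
          have h2 : m + 1 - 2 = m - 1 := by omega
          rw [h2, Nat.cast_sub hm, Nat.cast_one]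
  have h2 : |(∑ k ∈ Finset.Icc 1 m, (moebius k : ℝ) / k) * r m n| ≤ (m : ℝ) := by
    rw [abs_mul, abs_of_nonneg (r_nonneg m n)]
    calc |∑ k ∈ Finset.Icc 1 m, (moebius k : ℝ) / k| * r m n
        ≤ 1 * (m : ℝ) := mul_le_mul (S_bound m hm) (r_le m n hm) (r_nonneg m n)
          zero_le_one
      _ = (m : ℝ) := one_mul _
  have hm1 : (1:ℝ) ≤ m := by exact_mod_cast hm
  calc |1 + ∑ k ∈ Finset.Icc 2 m, (moebius k : ℝ) / k * r k n
        - (∑ k ∈ Finset.Icc 1 m, (moebius k : ℝ) / k) * r m n|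
      ≤ |(1:ℝ)| + |∑ k ∈ Finset.Icc 2 m, (moebius k : ℝ) / k * r k n|
        + |(∑ k ∈ Finset.Icc 1 m, (moebius k : ℝ) / k) * r m n| := by
        exact (abs_sub _ _).trans (by gcongr; exact abs_add_le _ _)
    _ ≤ 1 + ((m:ℝ) - 1) + m := by rw [abs_one]; gcongr
    _ = 2 * m := by ring

theorem F_norm_tendsto_zero (p α : ℝ) (hp1 : 1 ≤ p) (hp2 : p ≤ 2) (hα : α < -p - 1) :
    Tendsto (fun m : ℕ => ∑' n : ℕ, |F m (n + 1)| ^ p * ((n : ℝ) + 2) ^ α)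
      atTop (nhds 0) := by
  have hp0 : 0 < p := by linarith
  -- summable bound
  have hs : Summable (fun n : ℕ => (2:ℝ)^p * ((n:ℝ)+2)^(p+α)) := by
    have h0 : Summable (fun n : ℕ => ((n:ℝ))^(p+α)) :=
      Real.summable_nat_rpow.2 (by linarith)
    have h2 := (summable_nat_add_iff 2).mpr h0
    have h3 : Summable (fun n : ℕ => ((n:ℝ)+2)^(p+α)) := by
      refine h2.congr fun n => ?_
      push_cast; ring_nf
    exact h3.mul_left _
  have key := tendsto_tsum_of_dominated_convergence (𝓕 := atTop)
      (f := fun (m : ℕ) (n : ℕ) => |F m (n + 1)| ^ p * ((n : ℝ) + 2) ^ α)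
      (g := fun _ : ℕ => (0:ℝ)) (bound := fun n : ℕ => (2:ℝ)^p * ((n:ℝ)+2)^(p+α))
      hs ?_ ?_
  · simpa using key
  · -- pointwise convergence to 0
    intro n
    have hev : ∀ᶠ m in atTop,
        |F m (n + 1)| ^ p * ((n : ℝ) + 2) ^ α = 0 := by
      filter_upwards [eventually_ge_atTop (n + 2)] with m hm
      rw [F_zero m (n+1) (by omega) (by omega)]
      simp [Real.zero_rpow (ne_of_gt hp0)]
    exact Tendsto.congr' (hev.mono fun m hm => hm.symm) tendsto_const_nhds
  · -- uniform bound
    filter_upwards with m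
    intro n
    have hx2 : (0:ℝ) < (n:ℝ) + 2 := by positivity
    have hF : |F m (n + 1)| ≤ 2 * ((n:ℝ) + 2) := by
      rcases Nat.eq_zero_or_pos m with rfl | hm
      · have : F 0 (n+1) = 1 := by unfold F; simp
        rw [this]; rw [abs_one]; nlinarith
      · rcases le_or_gt m (n+1) with h | h
        · calc |F m (n+1)| ≤ 2 * m := F_bound m (n+1) hm
            _ ≤ 2 * ((n:ℝ) + 2) := by
              have : (m:ℝ) ≤ (n:ℝ) + 2 := by exact_mod_cast le_trans h (by omega)
              linarith
        · rw [F_zero m (n+1) (by omega) h, abs_zero]; positivity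
    have hnn : (0:ℝ) ≤ |F m (n + 1)| ^ p * ((n : ℝ) + 2) ^ α :=
      mul_nonneg (Real.rpow_nonneg (abs_nonneg _) p) (Real.rpow_nonneg hx2.le α)
    rw [Real.norm_eq_abs, abs_of_nonneg hnn]
    calc |F m (n + 1)| ^ p * ((n : ℝ) + 2) ^ α
        ≤ (2 * ((n:ℝ) + 2)) ^ p * ((n : ℝ) + 2) ^ α := by
          exact mul_le_mul_of_nonneg_right
            (Real.rpow_le_rpow (abs_nonneg _) hF hp0.le) (Real.rpow_nonneg hx2.le α)
      _ = (2:ℝ)^p * ((n:ℝ)+2)^(p+α) := by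
          rw [Real.mul_rpow (by norm_num) hx2.le, Real.rpow_add hx2, mul_assoc]
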